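/- In the RKHS of the exponential kernel k^e(x,y) = exp((x−b)^⊤(y−b)/σ²) on ℝ^d, the functions v_α(x) = ((x−p)^α / (√(α!) σ^{|α|})) · exp((p−b)^⊤(2x−p−b)/(2σ²)), indexed by multi-indices α, form an orthonormal system, and {v_α : |α| ≤ n} spans V_{p,n} = span{∂_x^α k(x,·)|_{x=p} : |α| ≤ n}. -/

import Mathlib

open scoped BigOperators

noncomputable def pderiv' {d : ℕ} (i : Fin d)
    (h : (Fin d → ℝ) → ℂ) : (Fin d → ℝ) → ℂ :=
  fun x => fderiv ℝ h x (Pi.single i 1)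

noncomputable def pIter' {d : ℕ} (i : Fin d) :
    ℕ → ((Fin d → ℝ) → ℂ) → ((Fin d → ℝ) → ℂ)
  | 0, h => h
  | n + 1, h => pderiv' i (pIter' i n h)

/-- The multi-index partial derivative `∂^α h` on `ℝ^d`. -/
noncomputable def mDeriv' {d : ℕ} (α : Fin d → ℕ)
    (h : (Fin d → ℝ) → ℂ) : (Fin d → ℝ) → ℂ :=
  (List.finRange d).foldr (fun i g => pIter' i (α i) g) h

/-- The monomial `(x − p)^α`, viewed as a complex number. -/
noncomputable def mono (d : ℕ) (x p : Fin d → ℝ) (α : Fin d → ℕ) : ℂ :=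
  ∏ i, ((x i : ℂ) - (p i : ℂ)) ^ (α i)

open Finset


noncomputable def Efun (m : ℕ) (c : ℂ) : ℝ → ℂ := fun z => (z:ℂ)^m * Complex.exp (c * z)

lemma Efun_hasDerivAt (m : ℕ) (c : ℂ) (z : ℝ) :
    HasDerivAt (Efun m c) ((m:ℂ) * Efun (m-1) c z + c * Efun m c z) z := by
  have hC : HasDerivAt (fun w : ℂ => w^m * Complex.exp (c * w))
      ((m:ℂ) * (z:ℂ)^(m-1) * Complex.exp (c*(z:ℂ)) +
        (z:ℂ)^m * (Complex.exp (c*(z:ℂ)) * c)) (z:ℝ) := by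
    have hexp : HasDerivAt (fun w : ℂ => Complex.exp (c*w)) (Complex.exp (c*(z:ℂ))*c) (z:ℂ) := by
      simpa using ((hasDerivAt_id (z:ℂ)).const_mul c).cexp
    exact (hasDerivAt_pow m _).mul hexp
  have := hC.comp_ofReal
  convert this using 1
  · rfl
  simp only [Efun]
  ring

lemma Efun_differentiable (m : ℕ) (c : ℂ) : Differentiable ℝ (Efun m c) :=
  fun z => (Efun_hasDerivAt m c z).differentiableAt

lemma deriv_Efun (m : ℕ) (c : ℂ) :
    deriv (Efun m c) = fun z => (m:ℂ) * Efun (m-1) c z + c * Efun m c z :=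
  funext fun z => (Efun_hasDerivAt m c z).deriv

/-- All iterated derivatives are differentiable. -/
def Sm (f : ℝ → ℂ) : Prop := ∀ n, Differentiable ℝ (deriv^[n] f)

lemma Sm.diff {f : ℝ → ℂ} (hf : Sm f) : Differentiable ℝ f := by
  have := hf 0; simpa using this

lemma Sm.iterate {f : ℝ → ℂ} (hf : Sm f) (m : ℕ) : Sm (deriv^[m] f) := by
  intro n
  rw [← Function.iterate_add_apply]
  exact hf (n + m)

lemma differentiable_ofReal : Differentiable ℝ (fun z : ℝ => (z:ℂ)) :=
  Complex.ofRealCLM.differentiable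

lemma hasDerivAt_ofReal (z : ℝ) : HasDerivAt (fun z : ℝ => (z:ℂ)) 1 z := by
  have := Complex.ofRealCLM.hasDerivAt (x := z)
  exact this

lemma iter_deriv_mul_id (f : ℝ → ℂ) (hf : Sm f) (n : ℕ) :
    deriv^[n] (fun z : ℝ => (z:ℂ) * f z) =
      fun z => (n:ℂ) * deriv^[n-1] f z + (z:ℂ) * deriv^[n] f z := by
  induction n with
  | zero => funext z; simp
  | succ k IH =>
    funext z
    rw [Function.iterate_succ_apply', IH]
    have hA : HasDerivAt (deriv^[k-1] f) (deriv (deriv^[k-1] f) z) z :=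
      (hf (k-1) z).hasDerivAt
    have hB : HasDerivAt (deriv^[k] f) (deriv (deriv^[k] f) z) z :=
      (hf k z).hasDerivAt
    have h := ((hA.const_mul (k:ℂ)).add ((hasDerivAt_ofReal z).mul hB))
    rw [show deriv (fun z => (k:ℂ) * deriv^[k-1] f z + (z:ℂ) * deriv^[k] f z) z = _ from h.deriv]
    have e1 : (k:ℂ) * deriv (deriv^[k-1] f) z = (k:ℂ) * deriv^[k] f z := by
      cases k with
      | zero => simp
      | succ j =>
        have : j + 1 - 1 = j := rfl
        rw [this, ← Function.iterate_succ_apply' deriv j f]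
    rw [e1, show k + 1 - 1 = k from rfl, ← Function.iterate_succ_apply' deriv k f]
    push_cast
    ring

lemma Sm.mul_id {f : ℝ → ℂ} (hf : Sm f) : Sm (fun z : ℝ => (z:ℂ) * f z) := by
  intro n
  rw [iter_deriv_mul_id f hf n]
  exact ((hf (n-1)).const_mul _).add (differentiable_ofReal.mul (hf n))

lemma iter_deriv_E0 (c : ℂ) (n : ℕ) :
    deriv^[n] (Efun 0 c) = fun z => c^n * Efun 0 c z := by
  induction n with
  | zero => funext z; simp
  | succ n IH =>
    funext z
    rw [Function.iterate_succ_apply', IH]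
    have : DifferentiableAt ℝ (Efun 0 c) z := Efun_differentiable 0 c z
    rw [deriv_const_mul _ this, deriv_Efun]
    simp only [Nat.zero_sub]
    push_cast
    ring

lemma Sm_E0 (c : ℂ) : Sm (Efun 0 c) := by
  intro n
  rw [iter_deriv_E0]
  exact (Efun_differentiable 0 c).const_mul _

lemma Efun_succ (m : ℕ) (c : ℂ) : Efun (m+1) c = fun z : ℝ => (z:ℂ) * Efun m c z := by
  funext z; simp only [Efun, pow_succ]; ring

lemma Sm_E (m : ℕ) (c : ℂ) : Sm (Efun m c) := by
  induction m with
  | zero => exact Sm_E0 c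
  | succ m IH => rw [Efun_succ]; exact IH.mul_id

lemma iter_deriv_E_zero (m : ℕ) (c : ℂ) (n : ℕ) :
    deriv^[n] (Efun m c) 0 = (n.descFactorial m : ℂ) * c^(n-m) := by
  induction m generalizing n with
  | zero =>
    rw [iter_deriv_E0]
    simp [Efun]
  | succ m IH =>
    rw [Efun_succ]
    have h := congrFun (iter_deriv_mul_id (Efun m c) (Sm_E m c) n) 0
    rw [h]
    cases n with
    | zero => simp
    | succ k =>
      rw [show k + 1 - 1 = k from rfl, IH k]
      push_cast [Complex.ofReal_zero, Nat.succ_descFactorial_succ]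
      ring





section shift
variable {f : ℝ → ℂ}

lemma iter_deriv_shift (hf : Sm f) (K : ℂ) (r : ℝ) (n : ℕ) :
    deriv^[n] (fun z => K * f (z - r)) = fun z => K * deriv^[n] f (z - r) := by
  induction n with
  | zero => rfl
  | succ k IH =>
    funext z
    rw [Function.iterate_succ_apply', IH]
    have hd : DifferentiableAt ℝ (fun z : ℝ => deriv^[k] f (z - r)) z :=
      ((hf k).comp (differentiable_id.sub_const r)).differentiableAt
    rw [deriv_const_mul _ hd, deriv_comp_sub_const, ← Function.iterate_succ_apply' deriv k f]

lemma Sm.shift (hf : Sm f) (K : ℂ) (r : ℝ) : Sm (fun z => K * f (z - r)) := by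
  intro n
  rw [iter_deriv_shift hf K r n]
  exact (((hf n).comp (differentiable_id.sub_const r))).const_mul K
end shift

section multi
variable {d : ℕ}

/-- constant times a product of single-variable factors -/
noncomputable def Pfun (c : ℂ) (g : Fin d → ℝ → ℂ) : (Fin d → ℝ) → ℂ :=
  fun x => c * ∏ j, g j (x j)

lemma pderiv'_P (c : ℂ) (g : Fin d → ℝ → ℂ) (hg : ∀ j, Differentiable ℝ (g j)) (i : Fin d) :
    pderiv' i (Pfun c g) = Pfun c (Function.update g i (deriv (g i))) := by
  funext x
  have hj : ∀ j ∈ (univ : Finset (Fin d)),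
      HasFDerivAt (fun x : Fin d → ℝ => g j (x j))
        (((1 : ℝ →L[ℝ] ℝ).smulRight (deriv (g j) (x j))).comp
          (ContinuousLinearMap.proj j : (Fin d → ℝ) →L[ℝ] ℝ)) x := by
    intro j _
    have h2 : HasFDerivAt (fun x : Fin d → ℝ => x j)
        (ContinuousLinearMap.proj j : (Fin d → ℝ) →L[ℝ] ℝ) x := by
      exact ContinuousLinearMap.hasFDerivAt (ContinuousLinearMap.proj (R := ℝ) (φ := fun _ : Fin d => ℝ) j)
    exact HasFDerivAt.comp x ((hg j (x j)).hasDerivAt.hasFDerivAt) h2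
  have hprod := HasFDerivAt.finset_prod hj
  have hP : HasFDerivAt (Pfun c g)
      (c • ∑ j, (∏ k ∈ univ.erase j, g k (x k)) •
        (((1 : ℝ →L[ℝ] ℝ).smulRight (deriv (g j) (x j))).comp
          (ContinuousLinearMap.proj j : (Fin d → ℝ) →L[ℝ] ℝ))) x :=
    hprod.const_mul c
  unfold pderiv'
  rw [hP.fderiv]
  simp only [ContinuousLinearMap.smul_apply, ContinuousLinearMap.sum_apply,
    ContinuousLinearMap.comp_apply, ContinuousLinearMap.proj_apply,
    ContinuousLinearMap.smulRight_apply, ContinuousLinearMap.one_apply,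
    smul_eq_mul]
  rw [Finset.sum_eq_single i]
  · simp only [Pi.single_eq_same, one_smul]
    unfold Pfun
    rw [← Finset.mul_prod_erase univ _ (mem_univ i)]
    simp only [Function.update_self]
    have he : ∏ k ∈ univ.erase i, Function.update g i (deriv (g i)) k (x k)
        = ∏ k ∈ univ.erase i, g k (x k) :=
      Finset.prod_congr rfl (fun k hk => by
        rw [Function.update_of_ne (Finset.ne_of_mem_erase hk)])
    rw [he]
    ring
  · intro j _ hji
    rw [Pi.single_eq_of_ne hji]
    simp
  · intro h; exact absurd (mem_univ i) h

lemma pIter'_P (c : ℂ) (g : Fin d → ℝ → ℂ) (hg : ∀ j, Sm (g j)) (i : Fin d) (n : ℕ) :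
    pIter' i n (Pfun c g) = Pfun c (Function.update g i (deriv^[n] (g i))) := by
  induction n with
  | zero =>
    show Pfun c g = _
    rw [Function.iterate_zero, id, Function.update_eq_self]
  | succ k IH =>
    show pderiv' i (pIter' i k (Pfun c g)) = _
    rw [IH]
    have hg' : ∀ j, Differentiable ℝ ((Function.update g i (deriv^[k] (g i))) j) := by
      intro j
      rcases eq_or_ne j i with rfl | hne
      · rw [Function.update_self]; exact hg j k
      · rw [Function.update_of_ne hne]
        have := hg j 0; simpa using this
    rw [pderiv'_P c _ hg' i, Function.update_self, Function.update_idem,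
      ← Function.iterate_succ_apply' deriv k (g i)]

lemma foldr_P (c : ℂ) (g : Fin d → ℝ → ℂ) (hg : ∀ j, Sm (g j)) (α : Fin d → ℕ)
    (L : List (Fin d)) (hL : L.Nodup) :
    L.foldr (fun i h => pIter' i (α i) h) (Pfun c g) =
      Pfun c (fun j => if j ∈ L then deriv^[α j] (g j) else g j) := by
  induction L with
  | nil => simp [Pfun]
  | cons i L IH =>
    have hnd := List.nodup_cons.mp hL
    rw [List.foldr_cons, IH hnd.2]
    have hSm : ∀ j, Sm (fun z => if j ∈ L then deriv^[α j] (g j) z else g j z) := by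
      intro j
      by_cases hj : j ∈ L
      · simp only [hj, if_true]
        intro n
        rw [← Function.iterate_add_apply]
        exact hg j (n + α j)
      · simp only [hj, if_false]; exact hg j
    have hfun : (fun j => if j ∈ L then deriv^[α j] (g j) else g j) =
        (fun j => fun z => if j ∈ L then deriv^[α j] (g j) z else g j z) := by
      funext j; by_cases hj : j ∈ L <;> simp [hj]
    rw [hfun, pIter'_P c _ hSm i (α i)]
    have hupd : Function.update (fun j => fun z => if j ∈ L then deriv^[α j] (g j) z else g j z) i
          (deriv^[α i] (fun z => if i ∈ L then deriv^[α i] (g i) z else g i z))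
        = fun j => if j ∈ i :: L then deriv^[α j] (g j) else g j := by
      funext j
      rcases eq_or_ne j i with rfl | hne
      · rw [Function.update_self]
        simp [hnd.1]
      · rw [Function.update_of_ne hne]
        by_cases hj : j ∈ L <;> simp [List.mem_cons, hne, hj]
    rw [hupd]

lemma mDeriv'_P (c : ℂ) (g : Fin d → ℝ → ℂ) (hg : ∀ j, Sm (g j)) (α : Fin d → ℕ) :
    mDeriv' α (Pfun c g) = Pfun c (fun j => deriv^[α j] (g j)) := by
  unfold mDeriv'
  rw [foldr_P c g hg α (List.finRange d) (List.nodup_finRange d)]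
  have : (fun j => if j ∈ List.finRange d then deriv^[α j] (g j) else g j)
      = fun j => deriv^[α j] (g j) := by
    funext j; simp [List.mem_finRange]
  rw [this]
end multi


lemma nat_coeff (m l j : ℕ) (h : l + j ≤ m) :
    m.choose (l+j) * (l+j).descFactorial l = m.descFactorial l * (m-l).choose j := by
  rw [Nat.descFactorial_eq_factorial_mul_choose, Nat.descFactorial_eq_factorial_mul_choose]
  have hc := Nat.choose_mul (n := m) (k := l+j) (s := l) (Nat.le_add_right l j)
  rw [Nat.add_sub_cancel_left] at hc
  calc m.choose (l+j) * (Nat.factorial l * (l+j).choose l)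
      = Nat.factorial l * (m.choose (l+j) * (l+j).choose l) := by ring
    _ = Nat.factorial l * (m.choose l * (m-l).choose j) := by rw [hc]
    _ = Nat.factorial l * m.choose l * (m-l).choose j := by ring

lemma key1d (m l : ℕ) (s q : ℂ) (hs : s ≠ 0) :
    ∑ k ∈ range (m+1),
        (m.choose k : ℂ) * s^k * (-q)^(m-k) * ((k.descFactorial l : ℂ) * (q/s)^(k-l))
      = if l = m then (m.factorial : ℂ) * s^m else 0 := by
  by_cases hlm : l ≤ m
  · have hsub : ∑ k ∈ range (m+1),
        (m.choose k : ℂ) * s^k * (-q)^(m-k) * ((k.descFactorial l : ℂ) * (q/s)^(k-l))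
        = ∑ k ∈ Ico l (m+1),
        (m.choose k : ℂ) * s^k * (-q)^(m-k) * ((k.descFactorial l : ℂ) * (q/s)^(k-l)) := by
      refine (Finset.sum_subset (fun k hk => ?_) (fun k hk hk2 => ?_)).symm
      · simp only [mem_Ico] at hk
        exact mem_range.mpr hk.2
      · simp only [mem_Ico, mem_range, not_and, not_le] at hk hk2
        have : k < l := by omega
        rw [Nat.descFactorial_eq_zero_iff_lt.mpr this]
        simp
    rw [hsub, Finset.sum_Ico_eq_sum_range]
    have hrange : m + 1 - l = (m - l) + 1 := by omega
    rw [hrange]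
    have hterm : ∀ j ∈ range ((m-l)+1),
        (m.choose (l+j) : ℂ) * s^(l+j) * (-q)^(m-(l+j)) *
          (((l+j).descFactorial l : ℂ) * (q/s)^(l+j-l))
        = ((m.descFactorial l : ℂ) * s^l) *
            (((m-l).choose j : ℂ) * q^j * (-q)^((m-l)-j)) := by
      intro j hj
      simp only [mem_range] at hj
      have hle : l + j ≤ m := by omega
      have hnc : (m.choose (l+j) : ℂ) * ((l+j).descFactorial l : ℂ)
          = (m.descFactorial l : ℂ) * ((m-l).choose j : ℂ) := by
        have := nat_coeff m l j hle
        exact_mod_cast congrArg (Nat.cast (R := ℂ)) this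
      have hij : l + j - l = j := by omega
      have hmj : m - (l+j) = (m-l) - j := by omega
      rw [hij, hmj]
      have hpow : s^(l+j) * (q/s)^j = s^l * q^j := by
        rw [div_pow, pow_add]
        field_simp
      calc (m.choose (l+j) : ℂ) * s^(l+j) * (-q)^((m-l)-j) *
            (((l+j).descFactorial l : ℂ) * (q/s)^j)
          = ((m.choose (l+j) : ℂ) * ((l+j).descFactorial l : ℂ)) *
              (s^(l+j) * (q/s)^j) * (-q)^((m-l)-j) := by ring
        _ = ((m.descFactorial l : ℂ) * ((m-l).choose j : ℂ)) *
              (s^l * q^j) * (-q)^((m-l)-j) := by rw [hnc, hpow]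
        _ = _ := by ring
    rw [Finset.sum_congr rfl hterm, ← Finset.mul_sum]
    have hbin : ∑ j ∈ range ((m-l)+1),
        ((m-l).choose j : ℂ) * q^j * (-q)^((m-l)-j) = (q + (-q))^(m-l) := by
      rw [add_pow]
      exact Finset.sum_congr rfl (fun j _ => by ring)
    rw [hbin]
    simp only [add_neg_cancel]
    rcases eq_or_lt_of_le hlm with rfl | hlt
    · simp [Nat.descFactorial_self]
    · rw [zero_pow (by omega : m - l ≠ 0), if_neg (by omega)]
      ring
  · push_neg at hlm
    rw [if_neg (by omega)]
    apply Finset.sum_eq_zero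
    intro k hk
    simp only [mem_range] at hk
    rw [Nat.descFactorial_eq_zero_iff_lt.mpr (by omega : k < l)]
    simp


section MainDefs
variable {d : ℕ}

noncomputable def NCr (d : ℕ) (σ : ℝ) (α : Fin d → ℕ) : ℝ :=
  Real.sqrt (∏ i, ((α i).factorial : ℝ)) * σ ^ (∑ i, α i)

noncomputable def coefR (d : ℕ) (σ : ℝ) (b p : Fin d → ℝ) (α β : Fin d → ℕ) : ℝ :=
  ∏ i, ((α i).choose (β i) : ℝ) * (σ^2)^(β i) * (-(p i - b i))^(α i - β i)

noncomputable def CCr (d : ℕ) (σ : ℝ) (b p : Fin d → ℝ) (α : Fin d → ℕ) : ℝ :=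
  Real.exp (-(∑ i, (p i - b i)^2)/(2*σ^2)) / NCr d σ α

noncomputable def PiF (α : Fin d → ℕ) : Finset (Fin d → ℕ) :=
  Fintype.piFinset (fun i => Finset.range (α i + 1))

lemma NCr_pos {σ : ℝ} (hσ : 0 < σ) (α : Fin d → ℕ) : 0 < NCr d σ α := by
  apply mul_pos
  · apply Real.sqrt_pos.mpr
    exact Finset.prod_pos fun i _ => by exact_mod_cast (α i).factorial_pos
  · exact pow_pos hσ _

lemma NCr_sq {σ : ℝ} (hσ : 0 < σ) (α : Fin d → ℕ) :
    NCr d σ α ^ 2 = (∏ i, ((α i).factorial : ℝ)) * (σ^2) ^ (∑ i, α i) := by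
  unfold NCr
  rw [mul_pow, Real.sq_sqrt (Finset.prod_nonneg fun i _ => by positivity), ← pow_mul,
    ← pow_mul, Nat.mul_comm]

lemma coefR_self (σ : ℝ) (b p : Fin d → ℝ) (α : Fin d → ℕ) :
    coefR d σ b p α α = (σ^2)^(∑ i, α i) := by
  unfold coefR
  simp only [Nat.choose_self, Nat.cast_one, Nat.sub_self, pow_zero, one_mul, mul_one]
  exact Finset.prod_pow_eq_pow_sum univ α (σ^2)

lemma mem_PiF {α β : Fin d → ℕ} : β ∈ PiF α ↔ ∀ i, β i ≤ α i := by
  unfold PiF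
  rw [Fintype.mem_piFinset]
  exact forall_congr' fun i => by rw [Finset.mem_range, Nat.lt_succ_iff]

lemma self_mem_PiF (α : Fin d → ℕ) : α ∈ PiF α := mem_PiF.mpr fun i => le_rfl

end MainDefs


/-- In the RKHS of the exponential kernel
`k^e(x,y) = exp((x−b)ᵀ(y−b)/σ²)` on `ℝ^d` (realized via `Φ`, with kernel sections `kfun`
and kernel derivative sections `w α` at `p` characterized by `⟨w α, h⟩ = ∂^α(Φh)(p)`),
the functions `v_α(x) = ((x−p)^α/(√(α!) σ^{|α|})) exp((p−b)ᵀ(2x−p−b)/(2σ²))` form an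
orthonormal system, and `{v_α : |α| ≤ n}` spans
`V_{p,n} = span{∂_x^α k(x,·)|_{x=p} : |α| ≤ n}` for every `n`. -/
theorem exponential_kernel_orthonormal_basis
    (d : ℕ) (σ : ℝ) (hσ : 0 < σ) (b p : Fin d → ℝ)
    (H : Type*) [NormedAddCommGroup H] [InnerProductSpace ℂ H] [CompleteSpace H]
    (Φ : H →ₗ[ℂ] ((Fin d → ℝ) → ℂ)) (hinj : Function.Injective Φ)
    (kfun : (Fin d → ℝ) → H)
    (hrepro : ∀ (h : H) (x : Fin d → ℝ), Φ h x = (inner ℂ (kfun x) h : ℂ))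
    (hker : ∀ x y : Fin d → ℝ,
      Φ (kfun y) x = Complex.exp (((∑ i, (x i - b i) * (y i - b i)) / σ ^ 2 : ℝ) : ℂ))
    (w : (Fin d → ℕ) → H)
    (hw : ∀ (α : Fin d → ℕ) (h : H), (inner ℂ (w α) h : ℂ) = mDeriv' α (Φ h) p) :
    ∃ v : (Fin d → ℕ) → H,
      (∀ (α : Fin d → ℕ) (x : Fin d → ℝ),
        Φ (v α) x =
          (mono d x p α /
            ((Real.sqrt (∏ i, (Nat.factorial (α i) : ℝ)) * σ ^ (∑ i, α i) : ℝ) : ℂ)) *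
          Complex.exp (((∑ i, (p i - b i) * (2 * x i - p i - b i)) / (2 * σ ^ 2) : ℝ) : ℂ)) ∧
      Orthonormal ℂ v ∧
      (∀ n : ℕ,
        Submodule.span ℂ {u : H | ∃ α : Fin d → ℕ, (∑ i, α i) ≤ n ∧ u = v α}
          = Submodule.span ℂ {u : H | ∃ α : Fin d → ℕ, (∑ i, α i) ≤ n ∧ u = w α}) := by
  classical
  have hσ0 : σ ≠ 0 := ne_of_gt hσ
  have hσ2 : (σ:ℝ)^2 ≠ 0 := pow_ne_zero 2 hσ0
  have hσ2C : ((σ^2 : ℝ) : ℂ) ≠ 0 := by exact_mod_cast hσ2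
  -- Step 1 : kernel sections in product form
  have hkx : ∀ x : Fin d → ℝ, Φ (kfun x) = Pfun 1 (fun i => fun z : ℝ =>
      ((Real.exp ((x i - b i)/σ^2 * (p i - b i)) : ℝ) : ℂ) *
        Efun 0 (((x i - b i)/σ^2 : ℝ) : ℂ) (z - p i)) := by
    intro x
    funext y
    rw [hker y x]
    unfold Pfun Efun
    rw [one_mul,
      show ((∑ i, (y i - b i) * (x i - b i)) / σ^2 : ℝ)
        = ∑ i, (y i - b i) * (x i - b i) / σ^2 from Finset.sum_div _ _ _]
    push_cast
    rw [Complex.exp_sum]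
    refine Finset.prod_congr rfl fun i _ => ?_
    simp only [pow_zero, one_mul]
    rw [← Complex.exp_add]
    congr 1
    ring
  have hSmk : ∀ (x : Fin d → ℝ) (i : Fin d), Sm (fun z : ℝ =>
      ((Real.exp ((x i - b i)/σ^2 * (p i - b i)) : ℝ) : ℂ) *
        Efun 0 (((x i - b i)/σ^2 : ℝ) : ℂ) (z - p i)) :=
    fun x i => Sm.shift (Sm_E 0 _) _ _
  -- Step 2 : the kernel-derivative sections
  have hΦkD : ∀ (β : Fin d → ℕ) (x : Fin d → ℝ), mDeriv' β (Φ (kfun x)) p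
      = ∏ i, ((Real.exp ((x i - b i)/σ^2 * (p i - b i)) : ℝ) : ℂ) *
          ((((x i - b i)/σ^2 : ℝ) : ℂ))^(β i) := by
    intro β x
    rw [hkx x, mDeriv'_P 1 _ (hSmk x) β]
    unfold Pfun
    rw [one_mul]
    refine Finset.prod_congr rfl fun i _ => ?_
    simp only [iter_deriv_shift (Sm_E 0 (((x i - b i)/σ^2 : ℝ) : ℂ)) _ (p i) (β i),
      sub_self, iter_deriv_E_zero, Nat.descFactorial_zero, Nat.cast_one, one_mul,
      Nat.sub_zero]
  have hΦw : ∀ (β : Fin d → ℕ) (x : Fin d → ℝ), Φ (w β) x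
      = (((∏ i, Real.exp ((x i - b i)/σ^2 * (p i - b i)) * ((x i - b i)/σ^2)^(β i)) : ℝ) : ℂ) := by
    intro β x
    rw [hrepro (w β) x, ← inner_conj_symm, hw β (kfun x), hΦkD β x,
      show (∏ i, ((Real.exp ((x i - b i)/σ^2 * (p i - b i)) : ℝ) : ℂ) *
          ((((x i - b i)/σ^2 : ℝ) : ℂ))^(β i))
        = (((∏ i, Real.exp ((x i - b i)/σ^2 * (p i - b i)) * ((x i - b i)/σ^2)^(β i)) : ℝ) : ℂ)
        from by push_cast; rfl]
    exact Complex.conj_ofReal _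
  -- nonvanishing constants
  have hNC : ∀ α : Fin d → ℕ, ((NCr d σ α : ℝ) : ℂ) ≠ 0 :=
    fun α => by exact_mod_cast ne_of_gt (NCr_pos hσ α)
  have hNCr : ∀ α : Fin d → ℕ, NCr d σ α ≠ 0 := fun α => ne_of_gt (NCr_pos hσ α)
  -- the orthonormal family
  set v : (Fin d → ℕ) → H := fun α =>
    ((CCr d σ b p α : ℝ) : ℂ) • ∑ β ∈ PiF α, ((coefR d σ b p α β : ℝ) : ℂ) • w β with hvdef
  have hΦvx : ∀ (α : Fin d → ℕ) (x : Fin d → ℝ), Φ (v α) x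
      = ((CCr d σ b p α : ℝ) : ℂ) *
          ∑ β ∈ PiF α, ((coefR d σ b p α β : ℝ) : ℂ) * Φ (w β) x := by
    intro α x
    rw [hvdef]
    simp only [map_smul, map_sum, Pi.smul_apply, Finset.sum_apply, smul_eq_mul]
  -- the binomial resummation, real version
  have hsum : ∀ (α : Fin d → ℕ) (x : Fin d → ℝ),
      ∑ β ∈ PiF α, coefR d σ b p α β *
          (∏ i, Real.exp ((x i - b i)/σ^2 * (p i - b i)) * ((x i - b i)/σ^2)^(β i))
        = (∏ i, (x i - p i)^(α i)) *
            Real.exp (∑ i, (x i - b i)/σ^2 * (p i - b i)) := by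
    intro α x
    have h1 : ∀ β ∈ PiF α, coefR d σ b p α β *
        (∏ i, Real.exp ((x i - b i)/σ^2 * (p i - b i)) * ((x i - b i)/σ^2)^(β i))
        = ∏ i, (((α i).choose (β i) : ℝ) * (σ^2)^(β i) * (-(p i - b i))^(α i - β i) *
            (Real.exp ((x i - b i)/σ^2 * (p i - b i)) * ((x i - b i)/σ^2)^(β i))) := by
      intro β _
      rw [coefR, ← Finset.prod_mul_distrib]
    rw [Finset.sum_congr rfl h1]
    unfold PiF
    rw [← Finset.prod_univ_sum (fun i => Finset.range (α i + 1))
      (fun i k => (((α i).choose k : ℝ) * (σ^2)^k * (-(p i - b i))^(α i - k) *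
        (Real.exp ((x i - b i)/σ^2 * (p i - b i)) * ((x i - b i)/σ^2)^k)))]
    rw [Real.exp_sum, ← Finset.prod_mul_distrib]
    refine Finset.prod_congr rfl fun i _ => ?_
    have h2 : ∀ k ∈ Finset.range (α i + 1),
        (((α i).choose k : ℝ) * (σ^2)^k * (-(p i - b i))^(α i - k) *
          (Real.exp ((x i - b i)/σ^2 * (p i - b i)) * ((x i - b i)/σ^2)^k))
        = ((x i - b i)^k * (-(p i - b i))^(α i - k) * ((α i).choose k : ℝ)) *
            Real.exp ((x i - b i)/σ^2 * (p i - b i)) := by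
      intro k _
      rw [div_pow]
      field_simp
    rw [Finset.sum_congr rfl h2, ← Finset.sum_mul, ← add_pow,
      show x i - b i + -(p i - b i) = x i - p i from by ring]
  -- the exponent identity, real version
  have hES : ∀ x : Fin d → ℝ, (∑ i, (p i - b i) * (2 * x i - p i - b i)) / (2*σ^2)
      = -(∑ i, (p i - b i)^2)/(2*σ^2) + ∑ i, (x i - b i)/σ^2 * (p i - b i) := by
    intro x
    rw [neg_div, Finset.sum_div, Finset.sum_div, ← Finset.sum_neg_distrib,
      ← Finset.sum_add_distrib]
    refine Finset.sum_congr rfl fun i _ => ?_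
    field_simp
    ring
  -- first bullet
  have hΦv : ∀ (α : Fin d → ℕ) (x : Fin d → ℝ), Φ (v α) x
      = (mono d x p α / ((NCr d σ α : ℝ) : ℂ)) *
          Complex.exp (((∑ i, (p i - b i) * (2 * x i - p i - b i)) / (2 * σ ^ 2) : ℝ) : ℂ) := by
    intro α x
    rw [hΦvx α x,
      show (∑ β ∈ PiF α, ((coefR d σ b p α β : ℝ) : ℂ) * Φ (w β) x)
        = (((∑ β ∈ PiF α, coefR d σ b p α β *
            (∏ i, Real.exp ((x i - b i)/σ^2 * (p i - b i)) * ((x i - b i)/σ^2)^(β i))) : ℝ) : ℂ)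
        from by
          rw [Complex.ofReal_sum]
          exact Finset.sum_congr rfl fun β _ => by
            rw [hΦw β x, ← Complex.ofReal_mul],
      hsum α x, ← Complex.ofReal_mul]
    have harg : CCr d σ b p α * ((∏ i, (x i - p i)^(α i)) *
        Real.exp (∑ i, (x i - b i)/σ^2 * (p i - b i)))
        = (∏ i, (x i - p i)^(α i)) / NCr d σ α *
            Real.exp ((∑ i, (p i - b i) * (2 * x i - p i - b i)) / (2 * σ ^ 2)) := by
      unfold CCr
      rw [hES x, Real.exp_add]
      ring
    rw [harg]
    unfold mono
    push_cast [Complex.ofReal_exp]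
    ring
  have hσC : (σ:ℂ) ≠ 0 := by exact_mod_cast hσ0
  -- Step 4 : product form of Φ (v β)
  have hΦvP : ∀ β : Fin d → ℕ, Φ (v β) = Pfun (((NCr d σ β : ℝ) : ℂ))⁻¹
      (fun i => fun z : ℝ => ((Real.exp ((p i - b i)^2/(2*σ^2)) : ℝ) : ℂ) *
        Efun (β i) (((p i - b i)/σ^2 : ℝ) : ℂ) (z - p i)) := by
    intro β
    funext x
    rw [hΦv β x]
    have hexp2 : Complex.exp (((∑ i, (p i - b i) * (2 * x i - p i - b i)) / (2 * σ ^ 2) : ℝ) : ℂ)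
        = ∏ i, (((Real.exp ((p i - b i)^2/(2*σ^2)) : ℝ) : ℂ) *
            Complex.exp ((((p i - b i)/σ^2 : ℝ) : ℂ) * ((x i - p i : ℝ) : ℂ))) := by
      rw [show ((∑ i, (p i - b i) * (2 * x i - p i - b i)) / (2 * σ ^ 2) : ℝ)
          = ∑ i, (p i - b i) * (2 * x i - p i - b i) / (2 * σ ^ 2) from Finset.sum_div _ _ _,
        Complex.ofReal_sum, Complex.exp_sum]
      refine Finset.prod_congr rfl fun i _ => ?_
      rw [Complex.ofReal_exp, ← Complex.exp_add]
      congr 1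
      push_cast
      field_simp
      ring
    rw [hexp2]
    have hmono : mono d x p β = ∏ i, ((x i - p i : ℝ) : ℂ)^(β i) :=
      Finset.prod_congr rfl fun i _ => by rw [Complex.ofReal_sub]
    rw [hmono]
    unfold Pfun Efun
    have hsplit : ∏ i, (((Real.exp ((p i - b i)^2/(2*σ^2)) : ℝ) : ℂ) *
          (((x i - p i : ℝ) : ℂ)^(β i) *
            Complex.exp ((((p i - b i)/σ^2 : ℝ) : ℂ) * ((x i - p i : ℝ) : ℂ))))
        = (∏ i, ((x i - p i : ℝ) : ℂ)^(β i)) *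
            ∏ i, (((Real.exp ((p i - b i)^2/(2*σ^2)) : ℝ) : ℂ) *
              Complex.exp ((((p i - b i)/σ^2 : ℝ) : ℂ) * ((x i - p i : ℝ) : ℂ))) := by
      rw [← Finset.prod_mul_distrib]
      exact Finset.prod_congr rfl fun i _ => by ring
    rw [hsplit]
    ring
  -- Step 5 : inner products of w with v
  have hSmv : ∀ (β : Fin d → ℕ) (i : Fin d), Sm (fun z : ℝ =>
      ((Real.exp ((p i - b i)^2/(2*σ^2)) : ℝ) : ℂ) *
        Efun (β i) (((p i - b i)/σ^2 : ℝ) : ℂ) (z - p i)) :=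
    fun β i => Sm.shift (Sm_E _ _) _ _
  have hwv : ∀ γ β : Fin d → ℕ, (inner ℂ (w γ) (v β) : ℂ) = (((NCr d σ β : ℝ) : ℂ))⁻¹ *
      ∏ i, (((Real.exp ((p i - b i)^2/(2*σ^2)) : ℝ) : ℂ) *
        (((γ i).descFactorial (β i) : ℂ) * ((((p i - b i)/σ^2 : ℝ) : ℂ))^(γ i - β i))) := by
    intro γ β
    rw [hw γ (v β), hΦvP β, mDeriv'_P _ _ (hSmv β) γ]
    unfold Pfun
    congr 1
    refine Finset.prod_congr rfl fun i _ => ?_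
    simp only [iter_deriv_shift (Sm_E (β i) (((p i - b i)/σ^2 : ℝ) : ℂ)) _ (p i) (γ i),
      sub_self, iter_deriv_E_zero]
  -- Step 6 : orthonormality
  have hvv : ∀ α β : Fin d → ℕ, (inner ℂ (v α) (v β) : ℂ) = if α = β then 1 else 0 := by
    intro α β
    have hv1 : v α = ((CCr d σ b p α : ℝ) : ℂ) •
        ∑ γ ∈ PiF α, ((coefR d σ b p α γ : ℝ) : ℂ) • w γ := rfl
    rw [hv1, inner_smul_left, sum_inner]
    simp only [inner_smul_left, Complex.conj_ofReal]
    have hterm : ∀ γ ∈ PiF α, ((coefR d σ b p α γ : ℝ) : ℂ) * (inner ℂ (w γ) (v β) : ℂ)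
        = (((NCr d σ β : ℝ) : ℂ))⁻¹ *
            ∏ i, (((Real.exp ((p i - b i)^2/(2*σ^2)) : ℝ) : ℂ) *
              (((α i).choose (γ i) : ℂ) * (((σ^2 : ℝ) : ℂ))^(γ i) *
                (-((p i - b i : ℝ) : ℂ))^(α i - γ i) *
                (((γ i).descFactorial (β i) : ℂ) *
                  (((p i - b i : ℝ) : ℂ) / (((σ^2 : ℝ) : ℂ)))^(γ i - β i)))) := by
      intro γ _
      rw [hwv γ β, coefR, Complex.ofReal_prod, mul_left_comm, ← Finset.prod_mul_distrib]
      congr 1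
      refine Finset.prod_congr rfl fun i _ => ?_
      push_cast
      ring
    rw [Finset.sum_congr rfl hterm, ← Finset.mul_sum]
    unfold PiF
    rw [← Finset.prod_univ_sum (fun i => Finset.range (α i + 1))
      (fun i k => (((Real.exp ((p i - b i)^2/(2*σ^2)) : ℝ) : ℂ) *
        (((α i).choose k : ℂ) * (((σ^2 : ℝ) : ℂ))^k *
          (-((p i - b i : ℝ) : ℂ))^(α i - k) *
          (((k).descFactorial (β i) : ℂ) *
            (((p i - b i : ℝ) : ℂ) / (((σ^2 : ℝ) : ℂ)))^(k - β i)))))]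
    have hkey : ∀ i : Fin d, (∑ k ∈ Finset.range (α i + 1),
        (((Real.exp ((p i - b i)^2/(2*σ^2)) : ℝ) : ℂ) *
        (((α i).choose k : ℂ) * (((σ^2 : ℝ) : ℂ))^k *
          (-((p i - b i : ℝ) : ℂ))^(α i - k) *
          (((k).descFactorial (β i) : ℂ) *
            (((p i - b i : ℝ) : ℂ) / (((σ^2 : ℝ) : ℂ)))^(k - β i)))))
        = ((Real.exp ((p i - b i)^2/(2*σ^2)) : ℝ) : ℂ) *
            (if β i = α i then ((α i).factorial : ℂ) * (((σ^2 : ℝ) : ℂ))^(α i) else 0) := by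
      intro i
      rw [← Finset.mul_sum]
      congr 1
      rw [← key1d (α i) (β i) (((σ^2 : ℝ) : ℂ)) (((p i - b i : ℝ) : ℂ)) hσ2C]
    rw [Finset.prod_congr rfl (fun i _ => hkey i)]
    by_cases hab : α = β
    · subst hab
      simp only [eq_self_iff_true, if_true]
      rw [show (∏ i, (((Real.exp ((p i - b i)^2/(2*σ^2)) : ℝ) : ℂ) *
            (((α i).factorial : ℂ) * (((σ^2 : ℝ) : ℂ))^(α i))))
          = (((∏ i, (Real.exp ((p i - b i)^2/(2*σ^2)) *
              (((α i).factorial : ℝ) * (σ^2)^(α i)))) : ℝ) : ℂ) from by push_cast; rfl]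
      rw [show ((CCr d σ b p α : ℝ) : ℂ) * ((((NCr d σ α : ℝ) : ℂ))⁻¹ *
            (((∏ i, (Real.exp ((p i - b i)^2/(2*σ^2)) *
              (((α i).factorial : ℝ) * (σ^2)^(α i)))) : ℝ) : ℂ))
          = (((CCr d σ b p α * ((NCr d σ α)⁻¹ *
              ∏ i, (Real.exp ((p i - b i)^2/(2*σ^2)) *
                (((α i).factorial : ℝ) * (σ^2)^(α i))))) : ℝ) : ℂ) from by push_cast; ring]
      rw [show (1 : ℂ) = ((1 : ℝ) : ℂ) from rfl]
      congr 1
      have hprodreal : ∏ i, (Real.exp ((p i - b i)^2/(2*σ^2)) *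
          (((α i).factorial : ℝ) * (σ^2)^(α i)))
          = Real.exp ((∑ i, (p i - b i)^2)/(2*σ^2)) *
              ((∏ i, ((α i).factorial : ℝ)) * (σ^2)^(∑ i, α i)) := by
        rw [Finset.prod_mul_distrib, ← Real.exp_sum, ← Finset.sum_div,
          Finset.prod_mul_distrib, Finset.prod_pow_eq_pow_sum]
      rw [hprodreal, ← NCr_sq hσ α]
      unfold CCr
      rw [neg_div, Real.exp_neg]
      have hE : Real.exp ((∑ i, (p i - b i)^2)/(2*σ^2)) ≠ 0 := Real.exp_ne_zero _
      rw [show (Real.exp ((∑ i, (p i - b i)^2)/(2*σ^2)))⁻¹ / NCr d σ α *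
            ((NCr d σ α)⁻¹ * (Real.exp ((∑ i, (p i - b i)^2)/(2*σ^2)) * NCr d σ α ^ 2))
          = ((Real.exp ((∑ i, (p i - b i)^2)/(2*σ^2)))⁻¹ *
              Real.exp ((∑ i, (p i - b i)^2)/(2*σ^2))) *
              ((NCr d σ α * (NCr d σ α)⁻¹) * (NCr d σ α * (NCr d σ α)⁻¹)) from by ring,
        inv_mul_cancel₀ hE, mul_inv_cancel₀ (hNCr α)]
      norm_num
    · rw [if_neg hab]
      obtain ⟨i0, hi0⟩ := Function.ne_iff.mp hab
      rw [Finset.prod_eq_zero (Finset.mem_univ i0)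
        (by rw [if_neg (fun h => hi0 h.symm)]; exact mul_zero _)]
      ring
  refine ⟨v, ?_, ?_, ?_⟩
  · intro α x
    exact hΦv α x
  · rw [orthonormal_iff_ite]
    exact fun α β => hvv α β
  · intro n
    have hCC0 : ∀ α : Fin d → ℕ, ((CCr d σ b p α : ℝ) : ℂ) ≠ 0 := fun α => by
      simp only [ne_eq, Complex.ofReal_eq_zero]
      unfold CCr
      exact div_ne_zero (Real.exp_ne_zero _) (hNCr α)
    have hco0 : ∀ α : Fin d → ℕ, ((coefR d σ b p α α : ℝ) : ℂ) ≠ 0 := fun α => by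
      simp only [ne_eq, Complex.ofReal_eq_zero]
      rw [coefR_self]
      exact pow_ne_zero _ hσ2
    have hdecomp : ∀ α : Fin d → ℕ, w α = ((coefR d σ b p α α : ℝ) : ℂ)⁻¹ •
        ((((CCr d σ b p α : ℝ) : ℂ))⁻¹ • v α -
          ∑ β ∈ (PiF α).erase α, ((coefR d σ b p α β : ℝ) : ℂ) • w β) := by
      intro α
      have h1 : (((CCr d σ b p α : ℝ) : ℂ))⁻¹ • v α
          = ∑ β ∈ PiF α, ((coefR d σ b p α β : ℝ) : ℂ) • w β := by
        rw [show v α = ((CCr d σ b p α : ℝ) : ℂ) •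
            ∑ β ∈ PiF α, ((coefR d σ b p α β : ℝ) : ℂ) • w β from rfl,
          smul_smul, inv_mul_cancel₀ (hCC0 α), one_smul]
      rw [h1, ← Finset.add_sum_erase _ _ (self_mem_PiF α), add_sub_cancel_right,
        smul_smul, inv_mul_cancel₀ (hco0 α), one_smul]
    apply le_antisymm
    · rw [Submodule.span_le]
      rintro u ⟨α, hαn, rfl⟩
      refine Submodule.smul_mem _ _ (Submodule.sum_mem _ fun β hβ =>
        Submodule.smul_mem _ _ (Submodule.subset_span ⟨β, ?_, rfl⟩))
      have hβα : ∀ i, β i ≤ α i := mem_PiF.mp hβ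
      exact le_trans (Finset.sum_le_sum fun i _ => hβα i) hαn
    · rw [Submodule.span_le]
      rintro u ⟨α, hαn, rfl⟩
      have key : ∀ s : ℕ, ∀ α : Fin d → ℕ, (∑ i, α i) ≤ s → (∑ i, α i) ≤ n →
          w α ∈ Submodule.span ℂ {u : H | ∃ α : Fin d → ℕ, (∑ i, α i) ≤ n ∧ u = v α} := by
        intro s
        induction s with
        | zero =>
          intro α h0 hn
          have hzb : ∀ i, α i = 0 := by
            intro i
            have := Finset.single_le_sum (f := α) (fun i _ => Nat.zero_le _) (Finset.mem_univ i)
            omega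
          have herase : (PiF α).erase α = ∅ := by
            apply Finset.eq_empty_of_forall_notMem
            intro β hβ
            have hβ' := Finset.mem_erase.mp hβ
            have hle : ∀ i, β i ≤ α i := mem_PiF.mp hβ'.2
            exact hβ'.1 (funext fun i => by have := hle i; have := hzb i; omega)
          rw [hdecomp α, herase, Finset.sum_empty, sub_zero]
          exact Submodule.smul_mem _ _ (Submodule.smul_mem _ _
            (Submodule.subset_span ⟨α, hn, rfl⟩))
        | succ s IH =>
          intro α hs hn
          by_cases hss : (∑ i, α i) ≤ s
          · exact IH α hss hn
          rw [hdecomp α]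
          refine Submodule.smul_mem _ _ (Submodule.sub_mem _
            (Submodule.smul_mem _ _ (Submodule.subset_span ⟨α, hn, rfl⟩))
            (Submodule.sum_mem _ fun β hβ => Submodule.smul_mem _ _ ?_))
          have hβ' := Finset.mem_erase.mp hβ
          have hle : ∀ i, β i ≤ α i := mem_PiF.mp hβ'.2
          have hlt : (∑ i, β i) < (∑ i, α i) := by
            apply Finset.sum_lt_sum (fun i _ => hle i)
            obtain ⟨i, hi⟩ := Function.ne_iff.mp hβ'.1
            exact ⟨i, Finset.mem_univ i, lt_of_le_of_ne (hle i) hi⟩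
          exact IH β (by omega) (by omega)
      exact key (∑ i, α i) α le_rfl hαn
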